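/- arXiv:1711.09787 — 2 statements merged into one kernel-verified Lean document; each statement's English description precedes it below -/
import Mathlib

section
/- The eigenvalues of the q-Laplacian of the star S_n on n ≥ 2 vertices are: 1 with multiplicity n-2, and the two values (2 + (n-2)q^2 ± sqrt(n^2 q^4 + 4(n-1)(1-q^2)q^2))/2. -/
open Matrix SimpleGraph Polynomial

/- The `q`-Laplacian of a graph: `I + q^2 (D - I) - q A`, where `D` is the diagonal
degree matrix and `A` the adjacency matrix. -/
open Classical in
noncomputable def qLap {V : Type*} [Fintype V] [DecidableEq V]
    (G : SimpleGraph V) (q : ℝ) : Matrix V V ℝ :=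
  1 + q ^ 2 • (Matrix.diagonal (fun i => ((G.neighborSet i).ncard : ℝ)) - 1)
    - q • Matrix.of (fun i j => if G.Adj i j then (1 : ℝ) else 0)

/- The star on `m+2` vertices: vertex `0` is adjacent to every other vertex. -/
def starGraph (m : ℕ) : SimpleGraph (Fin (m + 2)) :=
  SimpleGraph.fromRel (fun i _ => i = 0)


def starE (m : ℕ) : Fin (m + 1) ⊕ Fin 1 ≃ Fin (m + 2) where
  toFun := Sum.elim Fin.succ fun _ => 0
  invFun := Fin.cases (Sum.inr 0) fun i => Sum.inl i
  left_inv := by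
    rintro (i | j)
    · simp
    · simp [Subsingleton.elim j 0]
  right_inv := by intro k; induction k using Fin.cases <;> simp

lemma star_adj (m : ℕ) (i j : Fin (m + 2)) :
    (_root_.starGraph m).Adj i j ↔ i ≠ j ∧ (i = 0 ∨ j = 0) := by
  simp [_root_.starGraph, SimpleGraph.fromRel_adj]

lemma star_deg0 (m : ℕ) : ((_root_.starGraph m).neighborSet 0).ncard = m + 1 := by
  have h : (_root_.starGraph m).neighborSet 0 = {(0 : Fin (m+2))}ᶜ := by
    ext v
    simp [SimpleGraph.mem_neighborSet, star_adj, eq_comm]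
  rw [h, Set.ncard_eq_toFinset_card']
  simp [Finset.card_compl]
lemma star_deg1 (m : ℕ) (i : Fin (m + 2)) (hi : i ≠ 0) :
    ((_root_.starGraph m).neighborSet i).ncard = 1 := by
  have h : (_root_.starGraph m).neighborSet i = {(0 : Fin (m+2))} := by
    ext v
    simp only [SimpleGraph.mem_neighborSet, star_adj, Set.mem_singleton_iff]
    constructor
    · rintro ⟨hne, h0 | h0⟩
      · exact absurd h0 hi
      · exact h0
    · rintro rfl; exact ⟨hi, Or.inr rfl⟩
  rw [h, Set.ncard_singleton]

lemma star_submatrix (m : ℕ) (q x : ℝ) :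
    (x • (1 : Matrix (Fin (m+2)) (Fin (m+2)) ℝ) - qLap (_root_.starGraph m) q).submatrix
        (starE m) (starE m)
      = Matrix.fromBlocks ((x - 1) • (1 : Matrix (Fin (m+1)) (Fin (m+1)) ℝ))
          (Matrix.of fun _ _ => q) (Matrix.of fun _ _ => q)
          (Matrix.of fun _ _ => x - 1 - (m : ℝ) * q ^ 2) := by
  ext i j
  cases i with
  | inl i =>
    cases j with
    | inl j =>
      by_cases h : i = j <;>
        simp [starE, qLap, star_adj, star_deg1 m _ (Fin.succ_ne_zero _),
          Matrix.sub_apply, Matrix.add_apply, Matrix.smul_apply, Matrix.one_apply,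
          Matrix.diagonal_apply, Fin.succ_ne_zero, h, Fin.succ_inj]
    | inr j =>
      simp [starE, qLap, star_adj, star_deg1 m _ (Fin.succ_ne_zero _),
        Matrix.sub_apply, Matrix.add_apply, Matrix.smul_apply, Matrix.one_apply,
        Matrix.diagonal_apply, Fin.succ_ne_zero]
  | inr i =>
    cases j with
    | inl j =>
      simp [starE, qLap, star_adj, star_deg0,
        Matrix.sub_apply, Matrix.add_apply, Matrix.smul_apply, Matrix.one_apply,
        Matrix.diagonal_apply, (Fin.succ_ne_zero j).symm]
    | inr j =>
      simp [starE, qLap, star_adj, star_deg0,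
        Matrix.sub_apply, Matrix.add_apply, Matrix.smul_apply, Matrix.one_apply,
        Matrix.diagonal_apply]
      ring

lemma star_det (m : ℕ) (q x : ℝ) (hx : x ≠ 1) :
    (x • (1 : Matrix (Fin (m+2)) (Fin (m+2)) ℝ) - qLap (_root_.starGraph m) q).det
      = (x - 1) ^ m * (x ^ 2 - (2 + (m : ℝ) * q ^ 2) * x + (1 - q ^ 2)) := by
  have h0 : x - 1 ≠ 0 := sub_ne_zero.mpr hx
  rw [← Matrix.det_submatrix_equiv_self (starE m), star_submatrix]
  letI : Invertible ((x - 1) • (1 : Matrix (Fin (m+1)) (Fin (m+1)) ℝ)) :=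
    ⟨(x - 1)⁻¹ • (1 : Matrix (Fin (m+1)) (Fin (m+1)) ℝ),
      by rw [Matrix.smul_mul, Matrix.one_mul, smul_smul, inv_mul_cancel₀ h0, one_smul],
      by rw [Matrix.smul_mul, Matrix.one_mul, smul_smul, mul_inv_cancel₀ h0, one_smul]⟩
  rw [Matrix.det_fromBlocks₁₁]
  have hinv : ⅟((x - 1) • (1 : Matrix (Fin (m+1)) (Fin (m+1)) ℝ))
      = (x - 1)⁻¹ • (1 : Matrix (Fin (m+1)) (Fin (m+1)) ℝ) := rfl
  rw [hinv]
  have hA : ((x - 1) • (1 : Matrix (Fin (m+1)) (Fin (m+1)) ℝ)).det = (x - 1) ^ (m + 1) := by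
    simp [Matrix.det_smul]
  rw [hA, Matrix.det_fin_one]
  simp only [Matrix.sub_apply, Matrix.mul_apply, Matrix.smul_apply, Matrix.one_apply,
    Matrix.of_apply, smul_eq_mul]
  simp only [mul_ite, mul_one, mul_zero, Finset.sum_ite_eq', Finset.mem_univ, if_true,
    Finset.sum_const, Finset.card_univ, Fintype.card_fin, nsmul_eq_mul]
  field_simp
  push_cast
  ring

lemma eval_charpoly' {n : Type*} [Fintype n] [DecidableEq n] (M : Matrix n n ℝ) (x : ℝ) :
    (M.charpoly).eval x = (x • (1 : Matrix n n ℝ) - M).det := by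
  rw [Matrix.charpoly, ← Polynomial.coe_evalRingHom, RingHom.map_det]
  congr 1
  ext i j
  by_cases h : i = j <;>
    simp [h, charmatrix_apply, Matrix.diagonal_apply, Matrix.one_apply, Matrix.smul_apply]

lemma star_charpoly (m : ℕ) (q : ℝ) :
    (qLap (_root_.starGraph m) q).charpoly
      = (X - C 1) ^ m *
        ((X - C ((2 + (m : ℝ) * q ^ 2 +
            Real.sqrt ((m : ℝ) ^ 2 * q ^ 4 + 4 * ((m : ℝ) + 1) * q ^ 2)) / 2)) *
         (X - C ((2 + (m : ℝ) * q ^ 2 -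
            Real.sqrt ((m : ℝ) ^ 2 * q ^ 4 + 4 * ((m : ℝ) + 1) * q ^ 2)) / 2))) := by
  set d := Real.sqrt ((m : ℝ) ^ 2 * q ^ 4 + 4 * ((m : ℝ) + 1) * q ^ 2) with hd
  have hΔ : d ^ 2 = (m : ℝ) ^ 2 * q ^ 4 + 4 * ((m : ℝ) + 1) * q ^ 2 :=
    Real.sq_sqrt (by positivity)
  set r₁ : ℝ := (2 + (m : ℝ) * q ^ 2 + d) / 2 with hr₁
  set r₂ : ℝ := (2 + (m : ℝ) * q ^ 2 - d) / 2 with hr₂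
  have hsum : r₁ + r₂ = 2 + (m : ℝ) * q ^ 2 := by rw [hr₁, hr₂]; ring
  have hprod : r₁ * r₂ = 1 - q ^ 2 := by
    rw [hr₁, hr₂]; linear_combination (-1/4 : ℝ) * hΔ
  have key : ∀ x : ℝ, x ≠ 1 →
      ((qLap (_root_.starGraph m) q).charpoly).eval x
        = (((X - C 1) ^ m * ((X - C r₁) * (X - C r₂))) : Polynomial ℝ).eval x := by
    intro x hx
    rw [eval_charpoly', star_det m q x hx]
    simp only [eval_mul, eval_pow, eval_sub, eval_X, eval_C]
    linear_combination ((x - 1) ^ m * x) * hsum - (x - 1) ^ m * hprod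
  have hzero : (qLap (_root_.starGraph m) q).charpoly
      - (X - C 1) ^ m * ((X - C r₁) * (X - C r₂)) = 0 := by
    apply Polynomial.eq_zero_of_infinite_isRoot
    refine ((Set.finite_singleton (1 : ℝ)).infinite_compl).mono ?_
    intro x hx
    have hx' : x ≠ 1 := hx
    simp only [Set.mem_setOf_eq, Polynomial.IsRoot, eval_sub, key x hx', sub_self]
  exact sub_eq_zero.mp hzero

/- The eigenvalues of the `q`-Laplacian of the star on `n = m+2` vertices are `1` with
multiplicity `n-2 = m` together with `(2 + (n-2)q² ± √(n²q⁴ + 4(n-1)(1-q²)q²))/2`. -/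
theorem qLap_star_eigenvalues (m : ℕ) (q : ℝ) :
    (qLap (_root_.starGraph m) q).charpoly.roots =
      Multiset.replicate m (1 : ℝ) +
        {(2 + (m : ℝ) * q ^ 2 +
            Real.sqrt (((m : ℝ) + 2) ^ 2 * q ^ 4 + 4 * ((m : ℝ) + 1) * (1 - q ^ 2) * q ^ 2)) / 2,
         (2 + (m : ℝ) * q ^ 2 -
            Real.sqrt (((m : ℝ) + 2) ^ 2 * q ^ 4 + 4 * ((m : ℝ) + 1) * (1 - q ^ 2) * q ^ 2)) / 2} := by
  have harg : ((m : ℝ) + 2) ^ 2 * q ^ 4 + 4 * ((m : ℝ) + 1) * (1 - q ^ 2) * q ^ 2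
      = (m : ℝ) ^ 2 * q ^ 4 + 4 * ((m : ℝ) + 1) * q ^ 2 := by ring
  rw [harg, star_charpoly]
  have h1 : ((X - C (1 : ℝ)) ^ m).Monic := (monic_X_sub_C (1 : ℝ)).pow m
  have h2 := (monic_X_sub_C ((2 + (m : ℝ) * q ^ 2 +
      Real.sqrt ((m : ℝ) ^ 2 * q ^ 4 + 4 * ((m : ℝ) + 1) * q ^ 2)) / 2)).mul
    (monic_X_sub_C ((2 + (m : ℝ) * q ^ 2 -
      Real.sqrt ((m : ℝ) ^ 2 * q ^ 4 + 4 * ((m : ℝ) + 1) * q ^ 2)) / 2))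
  rw [Polynomial.roots_mul (h1.mul h2).ne_zero, Polynomial.roots_mul h2.ne_zero,
    Polynomial.roots_pow, Polynomial.roots_X_sub_C, Polynomial.roots_X_sub_C,
    Polynomial.roots_X_sub_C, Multiset.nsmul_singleton, Multiset.singleton_add]
  rfl
end

section
/- Let T be a tree on n > 2 vertices. Then for every real q, the second smallest eigenvalue of the q-Laplacian L_T^q is at most 1. -/
open Matrix SimpleGraph

section Aux

open Polynomial Finset


lemma charpoly_conj' {n R : Type*} [Fintype n] [DecidableEq n] [CommRing R]
    (U V A : Matrix n n R) (hUV : U * V = 1) (hVU : V * U = 1) :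
    (U * A * V).charpoly = A.charpoly := by
  let f : Matrix n n R →+* Matrix n n R[X] := (C : R →+* R[X]).mapMatrix
  have hc : Commute (Matrix.scalar n (X : R[X])) (f U) :=
    Matrix.scalar_commute _ (fun r' => Commute.all _ _) _
  have hfUV : f U * f V = 1 := by rw [← _root_.map_mul f, hUV, _root_.map_one f]
  have hfVU : f V * f U = 1 := by rw [← _root_.map_mul f, hVU, _root_.map_one f]
  have h1 : charmatrix (U * A * V) = f U * charmatrix A * f V := by
    show Matrix.scalar n (X : R[X]) - f (U * A * V) = f U * (Matrix.scalar n X - f A) * f V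
    rw [mul_sub, sub_mul, ← hc.eq, mul_assoc (Matrix.scalar n X), hfUV, mul_one,
      _root_.map_mul f, _root_.map_mul f]
  rw [Matrix.charpoly, h1, Matrix.det_mul, Matrix.det_mul, mul_comm (Matrix.det (f U)),
    mul_assoc, ← Matrix.det_mul, hfUV, Matrix.det_one, mul_one, Matrix.charpoly]

lemma charpoly_diagonal' {n R : Type*} [Fintype n] [DecidableEq n] [CommRing R]
    (d : n → R) : (Matrix.diagonal d).charpoly = ∏ i, (X - C (d i)) := by
  have h : charmatrix (Matrix.diagonal d) = Matrix.diagonal fun i => X - C (d i) := by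
    ext i j
    by_cases hij : i = j
    · subst hij; simp
    · simp [charmatrix_apply_ne _ _ _ hij, Matrix.diagonal_apply_ne _ hij,
        Matrix.diagonal_apply_ne d hij]
  rw [Matrix.charpoly, h, Matrix.det_diagonal]

lemma roots_charpoly_hermitian {n : Type*} [Fintype n] [DecidableEq n]
    {A : Matrix n n ℝ} (hA : A.IsHermitian) :
    A.charpoly.roots = Finset.univ.val.map hA.eigenvalues := by
  have h1 : (hA.eigenvectorUnitary : Matrix n n ℝ) * star (hA.eigenvectorUnitary : Matrix n n ℝ) = 1 :=
    Matrix.mem_unitaryGroup_iff.mp hA.eigenvectorUnitary.2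
  have h2 : star (hA.eigenvectorUnitary : Matrix n n ℝ) * (hA.eigenvectorUnitary : Matrix n n ℝ) = 1 :=
    Matrix.mem_unitaryGroup_iff'.mp hA.eigenvectorUnitary.2
  conv_lhs => rw [hA.spectral_theorem, Unitary.conjStarAlgAut_apply]
  rw [charpoly_conj' _ _ _ h1 h2, charpoly_diagonal']
  have : (RCLike.ofReal ∘ hA.eigenvalues : n → ℝ) = hA.eigenvalues := by
    ext i; simp
  rw [this, Finset.prod_eq_multiset_prod, ← Polynomial.roots_multiset_prod_X_sub_C
    (Finset.univ.val.map hA.eigenvalues), Multiset.map_map]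
  rfl

lemma tree_two_leaves {V : Type*} [Fintype V] [DecidableEq V] {G : SimpleGraph V}
    [DecidableRel G.Adj] (hT : G.IsTree) (hcard : 3 ≤ Fintype.card V) :
    ∃ i j : V, i ≠ j ∧ ¬ G.Adj i j ∧ G.degree i = 1 ∧ G.degree j = 1 := by
  classical
  have hconn := hT.isConnected
  have hdeg : ∀ v : V, 1 ≤ G.degree v := by
    intro v
    obtain ⟨w, hw⟩ : ∃ w : V, w ≠ v := Fintype.exists_ne_of_one_lt_card (by omega) v
    obtain ⟨p⟩ := hconn.preconnected v w
    cases p with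
    | nil => exact absurd rfl hw
    | cons h q =>
        rw [Nat.one_le_iff_ne_zero, ← Nat.pos_iff_ne_zero]
        exact (G.degree_pos_iff_exists_adj v).mpr ⟨_, h⟩
  set L : Finset V := univ.filter (fun v => G.degree v = 1) with hLdef
  have hL : 2 ≤ L.card := by
    by_contra h
    push_neg at h
    have hsum := G.sum_degrees_eq_twice_card_edges
    have hedge := hT.card_edgeFinset
    have key : ∀ v : V, 2 ≤ G.degree v + (if v ∈ L then 1 else 0) := by
      intro v
      by_cases hv : v ∈ L
      · have : G.degree v = 1 := by simpa [hLdef] using hv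
        simp [hv, this]
      · have h1 : G.degree v ≠ 1 := by simpa [hLdef] using hv
        have := hdeg v
        simp only [hv, if_false, add_zero]
        omega
    have hbig : 2 * Fintype.card V ≤ (∑ v, G.degree v) + L.card := by
      calc 2 * Fintype.card V = ∑ _v : V, 2 := by
            simp [Finset.sum_const, mul_comm]
        _ ≤ ∑ v, (G.degree v + (if v ∈ L then 1 else 0)) := Finset.sum_le_sum fun v _ => key v
        _ = (∑ v, G.degree v) + ∑ v, (if v ∈ L then 1 else 0) := Finset.sum_add_distrib
        _ = (∑ v, G.degree v) + L.card := by
            rw [Finset.sum_ite_mem, Finset.univ_inter, Finset.sum_const, smul_eq_mul, mul_one]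
    omega
  obtain ⟨i, hi, j, hj, hij⟩ := Finset.one_lt_card.mp (by omega : 1 < L.card)
  have hdi : G.degree i = 1 := by simpa [hLdef] using hi
  have hdj : G.degree j = 1 := by simpa [hLdef] using hj
  refine ⟨i, j, hij, ?_, hdi, hdj⟩
  intro hadj
  -- unique neighbors
  have huniq : ∀ {a b w : V}, G.degree a = 1 → G.Adj a b → G.Adj a w → w = b := by
    intro a b w ha hab haw
    have h1 : (G.neighborFinset a).card ≤ 1 := le_of_eq ha
    exact Finset.card_le_one.mp h1 w (by simpa using haw) b (by simpa using hab)
  obtain ⟨k, hki, hkj⟩ : ∃ k : V, k ≠ i ∧ k ≠ j := by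
    by_contra h
    push_neg at h
    have hsub : (univ : Finset V) ⊆ {i, j} := by
      intro v _
      by_cases hv : v = i
      · simp [hv]
      · simp [h v hv]
    have := Finset.card_le_card hsub
    have h2 : ({i, j} : Finset V).card ≤ 2 := Finset.card_insert_le _ _ |>.trans (by simp)
    simp [Finset.card_univ] at this
    omega
  have hwalk : ∀ {a b : V} (_p : G.Walk a b), (a = i ∨ a = j) → (b = i ∨ b = j) := by
    intro a b p
    induction p with
    | nil => exact id
    | @cons x y z hxy q ih =>
        intro hx
        apply ih
        rcases hx with rfl | rfl
        · right; exact huniq hdi hadj hxy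
        · left; exact huniq hdj (hadj.symm) hxy
  obtain ⟨p⟩ := hconn.preconnected i k
  rcases hwalk p (Or.inl rfl) with h' | h'
  · exact hki h'
  · exact hkj h'


lemma two_small_eigenvalues {n : Type*} [Fintype n] [DecidableEq n] {A : Matrix n n ℝ}
    (hA : A.IsHermitian) {i j : n} (hij : i ≠ j) (hii : A i i = 1) (hjj : A j j = 1)
    (h0 : A i j = 0) (h0' : A j i = 0) :
    ∃ k k', k ≠ k' ∧ hA.eigenvalues k ≤ 1 ∧ hA.eigenvalues k' ≤ 1 := by
  by_contra hcon
  push_neg at hcon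
  have H : ∀ k k', hA.eigenvalues k ≤ 1 → hA.eigenvalues k' ≤ 1 → k = k' := by
    intro k k' h h'
    by_contra hne
    exact absurd h' (not_le.mpr (hcon k k' hne h))
  set U : Matrix n n ℝ := (hA.eigenvectorUnitary : Matrix n n ℝ) with hUdef
  have hUstar : star U = Uᵀ := Matrix.conjTranspose_eq_transpose_of_trivial U
  have h1 : U * Uᵀ = 1 := by
    rw [← hUstar]; exact Matrix.mem_unitaryGroup_iff.mp hA.eigenvectorUnitary.2
  -- choose (a, b)
  obtain ⟨a, b, hab, hker⟩ : ∃ a b : ℝ, ¬(a = 0 ∧ b = 0) ∧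
      ∀ k, hA.eigenvalues k ≤ 1 → a * U i k + b * U j k = 0 := by
    by_cases hex : ∃ k₀, hA.eigenvalues k₀ ≤ 1
    · obtain ⟨k₀, hk₀⟩ := hex
      by_cases hz : U i k₀ = 0 ∧ U j k₀ = 0
      · exact ⟨1, 0, by simp, fun k hk => by rw [H k k₀ hk hk₀, hz.1, hz.2]; ring⟩
      · refine ⟨U j k₀, -(U i k₀), ?_, fun k hk => by rw [H k k₀ hk hk₀]; ring⟩
        intro ⟨hb, ha⟩
        exact hz ⟨by linarith [neg_eq_zero.mp ha], hb⟩
    · exact ⟨1, 0, by simp, fun k hk => absurd ⟨k, hk⟩ hex⟩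
  set x : n → ℝ := fun v => (if v = i then a else 0) + (if v = j then b else 0) with hxdef
  have hdotx : ∀ w : n → ℝ, w ⬝ᵥ x = w i * a + w j * b := by
    intro w
    simp only [dotProduct, hxdef, mul_add, Finset.sum_add_distrib, mul_ite, mul_zero,
      Finset.sum_ite_eq', Finset.mem_univ, if_true]
  have hxdot : ∀ w : n → ℝ, x ⬝ᵥ w = a * w i + b * w j := by
    intro w
    rw [dotProduct_comm, hdotx]
    ring
  set y : n → ℝ := Uᵀ *ᵥ x with hydef
  have hy : ∀ k, y k = a * U i k + b * U j k := by
    intro k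
    show (fun l => Uᵀ k l) ⬝ᵥ x = _
    rw [hdotx]
    simp [Matrix.transpose_apply]
    ring
  -- quadratic form two ways
  have hAx : x ⬝ᵥ (A *ᵥ x) = a ^ 2 + b ^ 2 := by
    rw [hxdot]
    show a * ((fun l => A i l) ⬝ᵥ x) + b * ((fun l => A j l) ⬝ᵥ x) = _
    rw [hdotx, hdotx]
    simp only [hii, hjj, h0, h0']
    ring
  have hspec : x ⬝ᵥ (A *ᵥ x) = ∑ k, hA.eigenvalues k * (y k) ^ 2 := by
    have hAeq : A = U * Matrix.diagonal hA.eigenvalues * Uᵀ := by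
      rw [← hUstar]
      have hs := hA.spectral_theorem
      rw [Unitary.conjStarAlgAut_apply] at hs
      exact hs
    conv_lhs => rw [hAeq]
    rw [← Matrix.mulVec_mulVec, ← Matrix.mulVec_mulVec, Matrix.dotProduct_mulVec x U,
      ← Matrix.mulVec_transpose, ← hydef]
    simp only [dotProduct, Matrix.mulVec_diagonal]
    apply Finset.sum_congr rfl
    intro k _
    ring
  have hnorm : ∑ k, (y k) ^ 2 = a ^ 2 + b ^ 2 := by
    have : ∑ k, (y k) ^ 2 = y ⬝ᵥ y := by
      simp [dotProduct, pow_two]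
    rw [this]
    conv_lhs => rw [hydef]
    rw [Matrix.dotProduct_mulVec, Matrix.vecMul_transpose, Matrix.mulVec_mulVec, h1,
      Matrix.one_mulVec, hxdot]
    simp [hxdef, hij, (Ne.symm hij)]
    ring
  have hterm : ∀ k, 0 ≤ (hA.eigenvalues k - 1) * y k ^ 2 := by
    intro k
    by_cases hk : hA.eigenvalues k ≤ 1
    · have hyk : y k = 0 := by rw [hy k]; exact hker k hk
      simp [hyk]
    · push_neg at hk
      exact mul_nonneg (by linarith) (sq_nonneg _)
  have hexy : ∃ k, y k ≠ 0 := by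
    by_contra hall
    push_neg at hall
    have h0sum : (0 : ℝ) = a ^ 2 + b ^ 2 := by
      rw [← hnorm]
      simp [hall]
    have ha : a = 0 := by nlinarith [sq_nonneg a, sq_nonneg b]
    have hb : b = 0 := by nlinarith [sq_nonneg a, sq_nonneg b]
    exact hab ⟨ha, hb⟩
  obtain ⟨k₁, hk₁⟩ := hexy
  have hk₁big : 1 < hA.eigenvalues k₁ := by
    by_contra hle
    push_neg at hle
    exact hk₁ (by rw [hy k₁]; exact hker k₁ hle)
  have hpos : 0 < ∑ k, (hA.eigenvalues k - 1) * y k ^ 2 := by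
    refine Finset.sum_pos' (fun k _ => hterm k) ⟨k₁, Finset.mem_univ _, ?_⟩
    have hy2 : 0 < y k₁ ^ 2 :=
      lt_of_le_of_ne (sq_nonneg _) (Ne.symm (pow_ne_zero _ hk₁))
    exact mul_pos (by linarith) hy2
  have hzero : ∑ k, (hA.eigenvalues k - 1) * y k ^ 2 = 0 := by
    have : ∀ k, (hA.eigenvalues k - 1) * y k ^ 2
        = hA.eigenvalues k * y k ^ 2 - y k ^ 2 := fun k => by ring
    rw [Finset.sum_congr rfl fun k _ => this k, Finset.sum_sub_distrib, ← hspec, hAx, hnorm]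
    ring
  linarith

lemma qLap_apply_ne {V : Type*} [Fintype V] [DecidableEq V] (G : SimpleGraph V) (q : ℝ)
    {u v : V} (h : u ≠ v) (hadj : ¬ G.Adj u v) : qLap G q u v = 0 := by
  simp [qLap, Matrix.sub_apply, Matrix.add_apply, Matrix.smul_apply, Matrix.one_apply_ne h,
    Matrix.diagonal_apply_ne _ h, hadj]

lemma qLap_apply_eq {V : Type*} [Fintype V] [DecidableEq V] (G : SimpleGraph V) (q : ℝ)
    (u : V) : qLap G q u u = 1 + q ^ 2 * (((G.neighborSet u).ncard : ℝ) - 1) := by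
  simp [qLap, Matrix.sub_apply, Matrix.add_apply, Matrix.smul_apply]

lemma qLap_isHermitian {V : Type*} [Fintype V] [DecidableEq V] (G : SimpleGraph V) (q : ℝ) :
    (qLap G q).IsHermitian := by
  show (qLap G q)ᴴ = qLap G q
  rw [Matrix.conjTranspose_eq_transpose_of_trivial]
  ext u v
  rw [Matrix.transpose_apply]
  by_cases h : u = v
  · subst h; rfl
  · simp [qLap, Matrix.sub_apply, Matrix.add_apply, Matrix.smul_apply,
      Matrix.one_apply_ne h, Matrix.one_apply_ne (Ne.symm h),
      Matrix.diagonal_apply_ne _ h, Matrix.diagonal_apply_ne _ (Ne.symm h)]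
    rw [SimpleGraph.adj_comm]

lemma degree_ncard {V : Type*} [Fintype V] [DecidableEq V] (G : SimpleGraph V)
    [DecidableRel G.Adj] (v : V) : (G.neighborSet v).ncard = G.degree v := by
  rw [Set.ncard_eq_toFinset_card', SimpleGraph.degree, SimpleGraph.neighborFinset_def]

end Aux

/- For a tree on `n = m+3 > 2` vertices, the second smallest eigenvalue of the
`q`-Laplacian is at most `1`.  Here `μ` is the antitone enumeration of the eigenvalues,
so the second smallest eigenvalue is `μ ⟨m+1, _⟩` (the `(n-1)`-st in decreasing order). -/
theorem qLap_second_smallest_le_one {m : ℕ}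
    (G : SimpleGraph (Fin (m + 3))) (hT : G.IsTree) (q : ℝ)
    (μ : Fin (m + 3) → ℝ) (hμ : Antitone μ)
    (hroots : (qLap G q).charpoly.roots = ↑(List.ofFn μ)) :
    μ (⟨m + 1, by omega⟩ : Fin (m + 3)) ≤ 1 := by
  classical
  by_contra hgt
  push_neg at hgt
  obtain ⟨i, j, hij, hnadj, hdi, hdj⟩ := tree_two_leaves hT
    (by rw [Fintype.card_fin]; omega)
  have hherm : (qLap G q).IsHermitian := qLap_isHermitian G q
  have hleaf : ∀ v : Fin (m + 3), G.degree v = 1 → qLap G q v v = 1 := by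
    intro v hv
    have h1 : ((G.neighborSet v).ncard : ℝ) = 1 := by
      rw [degree_ncard G v, hv, Nat.cast_one]
    rw [qLap_apply_eq, h1]
    ring
  obtain ⟨k, k', hkk', hk, hk'⟩ := two_small_eigenvalues hherm hij (hleaf i hdi) (hleaf j hdj)
    (qLap_apply_ne G q hij hnadj) (qLap_apply_ne G q (Ne.symm hij) fun h => hnadj (h.symm))
  have hroots' : (qLap G q).charpoly.roots = Finset.univ.val.map hherm.eigenvalues :=
    roots_charpoly_hermitian hherm
  have hmult : Multiset.map μ Finset.univ.val
      = Multiset.map hherm.eigenvalues Finset.univ.val := by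
    rw [Fin.univ_val_map, ← hroots, hroots', Fin.univ_val_map]
  set p : ℝ → Prop := fun t => t ≤ 1 with hp
  have hcount := congrArg (Multiset.countP p) hmult
  rw [Multiset.countP_map, Multiset.countP_map] at hcount
  have hle1 : Multiset.card (Finset.univ.val.filter fun a => p (μ a)) ≤ 1 := by
    have hsub : (Finset.univ.filter fun a => p (μ a))
        ⊆ {(⟨m + 2, by omega⟩ : Fin (m + 3))} := by
      intro a ha
      rw [Finset.mem_filter] at ha
      have hpa : μ a ≤ 1 := ha.2
      have hlt : (⟨m + 1, by omega⟩ : Fin (m + 3)) < a := by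
        by_contra hle
        push_neg at hle
        exact absurd (le_trans (hμ hle) hpa) (not_le.mpr hgt)
      have ha2 : a = (⟨m + 2, by omega⟩ : Fin (m + 3)) := by
        have h2 := a.isLt
        have h3 : m + 1 < (a : ℕ) := hlt
        exact Fin.ext (show (a : ℕ) = m + 2 by omega)
      simp [ha2]
    have := Finset.card_le_card hsub
    exact this.trans_eq (Finset.card_singleton _)
  have hge2 : 2 ≤ Multiset.card (Finset.univ.val.filter fun a => p (hherm.eigenvalues a)) := by
    have hsub : ({k, k'} : Finset (Fin (m + 3)))
        ⊆ (Finset.univ.filter fun a => p (hherm.eigenvalues a)) := by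
      intro a ha
      rw [Finset.mem_insert, Finset.mem_singleton] at ha
      rcases ha with rfl | rfl <;> simp [hp, hk, hk']
    have := Finset.card_le_card hsub
    rw [Finset.card_pair hkk'] at this
    exact this
  omega
end
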